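/- Let r, s ≥ 1 be integers, Q ∈ ℤ, N, M ≥ 0 integers, and q ∈ (0,1) a real number. Let χ = 1 if Q > 0 and χ = 0 otherwise. For n ∈ ℤ^{N+M} define n_j⁺ = n_j + (r/s)(N + ½ − j) − M + Q/s for 1 ≤ j ≤ N and n_j⁺ = n_j + (s/r)(M + ½ − (j−N)) − Q/r for N < j ≤ N+M, and set E₂(n) = ∑_{j=1}^{N+M} n_j⁺ + Q²/(2rs). Let S be the set of n ∈ ℤ^{N+M} with n_1 ≥ n_2 ≥ ⋯ ≥ n_N ≥ M + χ and n_{N+1} ≥ n_{N+2} ≥ ⋯ ≥ n_{N+M} ≥ 0. Then the family (q^{E₂(n)})_{n∈S} is summable and ∑_{n∈S} q^{E₂(n)} = q^{e} / (∏_{n=1}^{N}(1−q^n) · ∏_{m=1}^{M}(1−q^m)), where e = Q²/(2rs) + (r/(2s))N² + (s/(2r))M² + QN/s − QM/r + χ·N. -/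

import Mathlib

open Finset

/-- The pseudo-momentum `n_j⁺` for quantum numbers `n : Fin (N+M) → ℤ` (indices are
`0`-based, the paper's `n_j` is `n ⟨j-1⟩`): for `1 ≤ j ≤ N`,
`n_j⁺ = n_j + (r/s)(N + ½ − j) − M + Q/s`, and for `N < j ≤ N+M`,
`n_j⁺ = n_j + (s/r)(M + ½ − (j−N)) − Q/r`. -/
noncomputable def nPlus (r s : ℕ) (Q : ℤ) (N M : ℕ) (n : Fin (N + M) → ℤ)
    (j : Fin (N + M)) : ℝ :=
  if (j : ℕ) < N then
    (n j : ℝ) + ((r : ℝ) / s) * ((N : ℝ) + 1 / 2 - ((j : ℕ) + 1)) - (M : ℝ) + (Q : ℝ) / s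
  else
    (n j : ℝ) + ((s : ℝ) / r) * ((M : ℝ) + 1 / 2 - (((j : ℕ) : ℝ) + 1 - (N : ℝ))) - (Q : ℝ) / r

/-- The CFT-Hamiltonian eigenvalue `E₂(n) = ∑_j n_j⁺ + Q²/(2rs)`. -/
noncomputable def E2 (r s : ℕ) (Q : ℤ) (N M : ℕ) (n : Fin (N + M) → ℤ) : ℝ :=
  (∑ j : Fin (N + M), nPlus r s Q N M n j) + (Q : ℝ) ^ 2 / (2 * r * s)

/-- The set `S` of admissible quantum numbers: `n_1 ≥ ⋯ ≥ n_N ≥ M + χ` and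
`n_{N+1} ≥ ⋯ ≥ n_{N+M} ≥ 0`, where `χ = 1` if `Q > 0` and `χ = 0` otherwise. -/
def admissible (Q : ℤ) (N M : ℕ) : Set (Fin (N + M) → ℤ) :=
  {n | (∀ a b : Fin (N + M), a ≤ b → (b : ℕ) < N → n b ≤ n a)
    ∧ (∀ a : Fin (N + M), (a : ℕ) < N → (M : ℤ) + (if 0 < Q then 1 else 0) ≤ n a)
    ∧ (∀ a b : Fin (N + M), N ≤ (a : ℕ) → a ≤ b → n b ≤ n a)
    ∧ (∀ a : Fin (N + M), N ≤ (a : ℕ) → 0 ≤ n a)}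

/-! Write an admissible `n` blockwise as `n_j = c + ∑_{i ≥ j} a_i` with gaps `a_i ∈ ℕ`
(`c = M + χ` on the first block, `c = 0` on the second). This identifies `S` with
`ℕ^N × ℕ^M`. Since `E₂` is `∑_j n_j` plus a constant, and
`∑_j n_j = N c + ∑_i (i + 1) a_i` on each block, `q^{E₂}` is `q^e` times a product of
geometric series `∑_k q^{(i+1)k} = 1 / (1 - q^{i+1})`. -/

lemma hasSum_fin_pi_prod {κ : Type*} {n : ℕ} {f : Fin n → κ → ℝ} {s : Fin n → ℝ}
    (hf : ∀ i, 0 ≤ f i) (hs : ∀ i, HasSum (f i) (s i)) :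
    HasSum (fun x : Fin n → κ => ∏ i, f i (x i)) (∏ i, s i) := by
  induction n with
  | zero => simp
  | succ n ih =>
    rw [← (Fin.consEquiv fun _ => κ).hasSum_iff, Fin.prod_univ_succ]
    have htail := ih (fun i => hf i.succ) (fun i => hs i.succ)
    have htail_nonneg : 0 ≤ fun x : Fin n → κ => ∏ i : Fin n, f i.succ (x i) :=
      fun x => prod_nonneg fun i _ => hf i.succ (x i)
    have hsum := (hs 0).summable.mul_of_nonneg htail.summable (hf 0) htail_nonneg
    have hprod := (hs 0).mul htail hsum
    have hcomp : (fun x : Fin (n + 1) → κ => ∏ i, f i (x i)) ∘ Fin.consEquiv (fun _ => κ)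
        = fun p => f 0 p.1 * ∏ i : Fin n, f i.succ (p.2 i) := by
      funext p
      simp [Fin.consEquiv, Fin.prod_univ_succ]
    rwa [hcomp]

lemma prod_Icc_one_eq_prod_fin {M : Type*} [CommMonoid M] (f : ℕ → M) (n : ℕ) :
    ∏ i ∈ Icc 1 n, f i = ∏ i : Fin n, f (i + 1) := by
  induction n with
  | zero => simp
  | succ n ih => rw [prod_Icc_succ_top (by omega), ih, Fin.prod_univ_castSucc]; rfl

lemma hasSum_pow_sum_succ_mul {q : ℝ} (hq0 : 0 ≤ q) (hq1 : q < 1) (n : ℕ) :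
    HasSum (fun a : Fin n → ℕ => q ^ ∑ i : Fin n, ((i : ℕ) + 1) * a i)
      (∏ i ∈ Icc 1 n, (1 - q ^ i))⁻¹ := by
  rw [prod_Icc_one_eq_prod_fin, ← prod_inv_distrib]
  simp_rw [← prod_pow_eq_pow_sum, pow_mul]
  exact hasSum_fin_pi_prod (fun i k => pow_nonneg (pow_nonneg hq0 _) k)
    fun i => hasSum_geometric_of_lt_one (pow_nonneg hq0 _) (pow_lt_one₀ hq0 hq1 (by omega))

section BoundedAntitone

variable {n : ℕ} (c : ℤ)

def boundedAntitone (c : ℤ) (n : ℕ) : Set (Fin n → ℤ) :=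
  {v | Antitone v ∧ ∀ i, c ≤ v i}

def nextOr (v : Fin n → ℤ) (i : Fin n) : ℤ :=
  if h : (i : ℕ) + 1 < n then v ⟨i + 1, h⟩ else c

def gaps (v : Fin n → ℤ) (i : Fin n) : ℕ := (v i - nextOr c v i).toNat

def tailSum (a : Fin n → ℕ) (j : Fin n) : ℤ := c + ∑ i ∈ Ici j, (a i : ℤ)

lemma tailSum_eq_add_nextOr (a : Fin n → ℕ) (j : Fin n) :
    tailSum c a j = a j + nextOr c (tailSum c a) j := by
  unfold tailSum nextOr
  rw [Ici_eq_cons_Ioi, sum_cons]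
  split_ifs with h
  · have : Ioi j = Ici ⟨j + 1, h⟩ := by
      ext i
      simp only [mem_Ioi, mem_Ici, Fin.lt_def, Fin.le_def]
      omega
    rw [this]; ring
  · have : Ioi j = ∅ := by
      ext i
      simp only [mem_Ioi, Fin.lt_def, notMem_empty, iff_false]
      omega
    rw [this, sum_empty]; ring

lemma gaps_tailSum (a : Fin n → ℕ) : gaps c (tailSum c a) = a := by
  funext i
  simp [gaps, tailSum_eq_add_nextOr c a i]

lemma tailSum_mem_boundedAntitone (a : Fin n → ℕ) : tailSum c a ∈ boundedAntitone c n :=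
  ⟨fun _ _ hij => add_le_add_right
      (sum_le_sum_of_subset_of_nonneg (Ici_subset_Ici.2 hij) fun _ _ _ => Nat.cast_nonneg _) c,
    fun _ => le_add_of_nonneg_right (sum_nonneg fun _ _ => Nat.cast_nonneg _)⟩

lemma nextOr_le {v : Fin n → ℤ} (hv : v ∈ boundedAntitone c n) (i : Fin n) :
    nextOr c v i ≤ v i := by
  unfold nextOr
  split_ifs with h
  · exact hv.1 (Fin.le_def.2 (Nat.le_succ _))
  · exact hv.2 i

lemma tailSum_gaps {v : Fin n → ℤ} (hv : v ∈ boundedAntitone c n) :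
    tailSum c (gaps c v) = v := by
  funext j
  induction hk : n - (j : ℕ) generalizing j with
  | zero => omega
  | succ k ih =>
    rw [tailSum_eq_add_nextOr, gaps, Int.toNat_of_nonneg (sub_nonneg.2 (nextOr_le c hv j))]
    suffices nextOr c (tailSum c (gaps c v)) j = nextOr c v j by rw [this]; ring
    unfold nextOr
    split_ifs with h
    · exact ih _ (by simp only; omega)
    · rfl

def boundedAntitoneEquiv (c : ℤ) (n : ℕ) : boundedAntitone c n ≃ (Fin n → ℕ) where
  toFun v := gaps c v
  invFun a := ⟨tailSum c a, tailSum_mem_boundedAntitone c a⟩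
  left_inv v := Subtype.ext (tailSum_gaps c v.2)
  right_inv := gaps_tailSum c

lemma sum_tailSum (a : Fin n → ℕ) :
    ∑ j, tailSum c a j = n * c + ∑ i : Fin n, ((i : ℤ) + 1) * a i := by
  simp only [tailSum, sum_add_distrib, sum_const, card_univ, Fintype.card_fin, nsmul_eq_mul]
  rw [sum_comm' (t' := univ) (s' := fun i => Iic i) (by simp)]
  simp [Fin.card_Iic]

end BoundedAntitone

lemma sum_eq_of_mem_boundedAntitone {n : ℕ} {c : ℤ} {v : Fin n → ℤ}
    (hv : v ∈ boundedAntitone c n) :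
    ∑ j, v j = n * c + ∑ i : Fin n, ((i : ℤ) + 1) * gaps c v i := by
  conv_lhs => rw [← tailSum_gaps c hv]
  exact sum_tailSum c _

lemma mem_admissible_iff {Q : ℤ} {N M : ℕ} {n : Fin (N + M) → ℤ} :
    n ∈ admissible Q N M ↔
      (fun i => n (Fin.castAdd M i)) ∈ boundedAntitone ((M : ℤ) + if 0 < Q then 1 else 0) N ∧
      (fun i => n (Fin.natAdd N i)) ∈ boundedAntitone 0 M := by
  have hnatAdd : ∀ (x : Fin (N + M)) (hx : N ≤ (x : ℕ)),
      x = Fin.natAdd N ⟨x - N, Nat.sub_lt_left_of_lt_add hx x.isLt⟩ :=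
    fun x hx => Fin.ext (by simp only [Fin.val_natAdd]; omega)
  constructor
  · rintro ⟨hanti₁, hlb₁, hanti₂, hlb₂⟩
    exact ⟨⟨fun i j hij => hanti₁ _ _ hij j.isLt, fun i => hlb₁ _ i.isLt⟩,
      fun i j hij => hanti₂ (Fin.natAdd N i) (Fin.natAdd N j) (Nat.le_add_right _ _)
        ((Fin.natAdd_le_natAdd_iff N).2 hij),
      fun i => hlb₂ _ (Nat.le_add_right _ _)⟩
  · rintro ⟨⟨hanti₁, hlb₁⟩, hanti₂, hlb₂⟩
    refine ⟨fun a b hab hb => hanti₁ (a := ⟨a, by omega⟩) (b := ⟨b, hb⟩) hab,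
      fun a ha => hlb₁ ⟨a, ha⟩, fun a b ha hab => ?_, fun a ha => ?_⟩
    · rw [hnatAdd a ha, hnatAdd b (ha.trans hab)]
      exact hanti₂ (Fin.le_def.2 (by simp only; omega))
    · rw [hnatAdd a ha]
      exact hlb₂ _

def admissibleEquiv (Q : ℤ) (N M : ℕ) :
    admissible Q N M ≃ (Fin N → ℕ) × (Fin M → ℕ) :=
  ((Fin.appendEquiv N M).symm.subtypeEquiv (p := (· ∈ admissible Q N M))
    fun _ => mem_admissible_iff).trans <|
    Equiv.subtypeProdEquivProd.trans <|
      (boundedAntitoneEquiv _ N).prodCongr (boundedAntitoneEquiv 0 M)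

lemma sum_fin_val_cast (k : ℕ) : ∑ i : Fin k, (i : ℝ) = k * (k - 1) / 2 := by
  induction k with
  | zero => simp
  | succ k ih =>
    rw [Fin.sum_univ_castSucc]
    simp only [Fin.val_castSucc, Fin.val_last, ih]
    push_cast
    ring

section Energy

variable (r s : ℕ) (Q : ℤ) (N M : ℕ)

lemma nPlus_eq_add_nPlus_zero (n : Fin (N + M) → ℤ) (j : Fin (N + M)) :
    nPlus r s Q N M n j = n j + nPlus r s Q N M 0 j := by
  unfold nPlus
  split_ifs <;> simp only [Pi.zero_apply, Int.cast_zero] <;> ring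

lemma E2_eq_sum_add_E2_zero (n : Fin (N + M) → ℤ) :
    E2 r s Q N M n = ∑ j, (n j : ℝ) + E2 r s Q N M 0 := by
  rw [E2, E2, sum_congr rfl fun j _ => nPlus_eq_add_nPlus_zero r s Q N M n j, sum_add_distrib]
  ring

lemma E2_zero_add :
    E2 r s Q N M 0 + N * ((M : ℝ) + if 0 < Q then 1 else 0)
      = (Q : ℝ) ^ 2 / (2 * r * s) + (r : ℝ) / (2 * s) * (N : ℝ) ^ 2
        + (s : ℝ) / (2 * r) * (M : ℝ) ^ 2 + (Q : ℝ) * N / s - (Q : ℝ) * M / r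
        + (if 0 < Q then 1 else 0 : ℝ) * N := by
  have hfst : ∀ i : Fin N, nPlus r s Q N M 0 (Fin.castAdd M i)
      = r / s * ((N : ℝ) + 1 / 2 - (i + 1)) - M + Q / s := by
    intro i; simp [nPlus]
  have hsnd : ∀ i : Fin M, nPlus r s Q N M 0 (Fin.natAdd N i)
      = s / r * ((M : ℝ) + 1 / 2 - (i + 1)) - Q / r := by
    intro i
    rw [nPlus, if_neg (by simp)]
    simp only [Pi.zero_apply, Int.cast_zero, Fin.val_natAdd]
    push_cast
    ring
  simp only [E2, Fin.sum_univ_add, hfst, hsnd, sum_sub_distrib, sum_add_distrib, ← mul_sum,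
    sum_fin_val_cast, sum_const, card_univ, Fintype.card_fin, nsmul_eq_mul]
  ring

end Energy

lemma admissibleEquiv_apply {Q : ℤ} {N M : ℕ} (n : admissible Q N M) :
    admissibleEquiv Q N M n =
      (gaps ((M : ℤ) + if 0 < Q then 1 else 0) fun i => n.1 (Fin.castAdd M i),
        gaps 0 fun i => n.1 (Fin.natAdd N i)) := rfl

lemma E2_eq_of_mem_admissible (r s : ℕ) {Q : ℤ} {N M : ℕ} (n : admissible Q N M) :
    E2 r s Q N M n
      = (Q : ℝ) ^ 2 / (2 * r * s) + (r : ℝ) / (2 * s) * (N : ℝ) ^ 2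
        + (s : ℝ) / (2 * r) * (M : ℝ) ^ 2 + (Q : ℝ) * N / s - (Q : ℝ) * M / r
        + (if 0 < Q then 1 else 0 : ℝ) * N
        + ((∑ i : Fin N, ((i : ℕ) + 1) * (admissibleEquiv Q N M n).1 i : ℕ) : ℝ)
        + ((∑ i : Fin M, ((i : ℕ) + 1) * (admissibleEquiv Q N M n).2 i : ℕ) : ℝ) := by
  obtain ⟨hfst, hsnd⟩ := mem_admissible_iff.1 n.2
  have hsum : ∑ j, (n.1 j : ℝ)
      = N * ((M : ℝ) + if 0 < Q then 1 else 0)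
        + ((∑ i : Fin N, ((i : ℕ) + 1) * (admissibleEquiv Q N M n).1 i : ℕ) : ℝ)
        + ((∑ i : Fin M, ((i : ℕ) + 1) * (admissibleEquiv Q N M n).2 i : ℕ) : ℝ) := by
    have hblocks := congr(($(sum_eq_of_mem_boundedAntitone hfst) : ℝ)
      + $(sum_eq_of_mem_boundedAntitone hsnd))
    push_cast at hblocks ⊢
    rw [admissibleEquiv_apply, Fin.sum_univ_add]
    linear_combination hblocks
  rw [E2_eq_sum_add_E2_zero, hsum, ← E2_zero_add]
  ring

theorem partition_function_block_general (r s : ℕ) (Q : ℤ) (N M : ℕ)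
    (q : ℝ) (hq : q ∈ Set.Ioo (0 : ℝ) 1) :
    Summable (fun n : admissible Q N M => q ^ E2 r s Q N M (n : Fin (N + M) → ℤ))
    ∧ ∑' n : admissible Q N M, q ^ E2 r s Q N M (n : Fin (N + M) → ℤ)
      = q ^ ((Q : ℝ) ^ 2 / (2 * r * s) + (r : ℝ) / (2 * s) * (N : ℝ) ^ 2
            + (s : ℝ) / (2 * r) * (M : ℝ) ^ 2 + (Q : ℝ) * N / s - (Q : ℝ) * M / r
            + (if 0 < Q then 1 else 0 : ℝ) * N)
        / ((∏ i ∈ Finset.Icc 1 N, (1 - q ^ i)) * ∏ i ∈ Finset.Icc 1 M, (1 - q ^ i)) := by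
  obtain ⟨hq0, hq1⟩ := hq
  refine (fun h : HasSum _ _ => ⟨h.summable, h.tsum_eq⟩) ?_
  have hfst := hasSum_pow_sum_succ_mul hq0.le hq1 N
  have hsnd := hasSum_pow_sum_succ_mul hq0.le hq1 M
  have hsummable := hfst.summable.mul_of_nonneg hsnd.summable
    (fun _ => pow_nonneg hq0.le _) (fun _ => pow_nonneg hq0.le _)
  have hpairs := hfst.mul hsnd hsummable
  rw [← (admissibleEquiv Q N M).symm.hasSum_iff, div_eq_mul_inv, mul_inv]
  refine (hpairs.mul_left _).congr_fun fun p => ?_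
  rw [Function.comp_apply, E2_eq_of_mem_admissible, Equiv.apply_symm_apply,
    Real.rpow_add hq0, Real.rpow_add hq0, Real.rpow_natCast, Real.rpow_natCast, mul_assoc]

/-- The generating function of the eigenvalues `E₂` over the admissible set:
`∑_{n∈S} q^{E₂(n)} = q^e / (∏_{n=1}^N (1−q^n) ∏_{m=1}^M (1−q^m))` with
`e = Q²/(2rs) + (r/(2s))N² + (s/(2r))M² + QN/s − QM/r + χN`, and the family is
summable. -/
theorem partition_function_block (r s : ℕ) (hr : 1 ≤ r) (hs : 1 ≤ s) (Q : ℤ) (N M : ℕ)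
    (q : ℝ) (hq : q ∈ Set.Ioo (0 : ℝ) 1) :
    Summable (fun n : admissible Q N M => q ^ E2 r s Q N M (n : Fin (N + M) → ℤ))
    ∧ ∑' n : admissible Q N M, q ^ E2 r s Q N M (n : Fin (N + M) → ℤ)
      = q ^ ((Q : ℝ) ^ 2 / (2 * r * s) + (r : ℝ) / (2 * s) * (N : ℝ) ^ 2
            + (s : ℝ) / (2 * r) * (M : ℝ) ^ 2 + (Q : ℝ) * N / s - (Q : ℝ) * M / r
            + (if 0 < Q then 1 else 0 : ℝ) * N)
        / ((∏ i ∈ Finset.Icc 1 N, (1 - q ^ i)) * ∏ i ∈ Finset.Icc 1 M, (1 - q ^ i)) :=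
  partition_function_block_general r s Q N M q hq
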